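/- Let X be a surface with χ(O_X) = 1 and q(X) = h¹(O_X) = 3, and let P be a line bundle in Pic⁰(X) with h⁰(−P) = 0 and h¹(−P) > 0. Suppose the cup product map H¹(−P) ⊗ H¹(O_X) → H²(−P) is nonzero on all nonzero simple tensors. Then we get a contradiction; i.e., no such P exists. -/

import Mathlib

/-!
Choosing bases, `cup` becomes a three-dimensional linear family of `m × (m + 1)` matrices
(`m = dim H1P`, and `dim H2P = m + 1` by the Euler characteristic) whose nonzero members all
have independent rows; no such family exists (a case of Hopf's theorem).

For a pencil `P + a • Q` of matrices with independent rows (`Q` included), the coefficients of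
the vector of signed maximal minors of `P + X • Q` form a basis of `K^(m+1)`: a vector
orthogonal to all of them is `x Q` for some `x` (the top coefficient is the minor vector of `Q`),
the recursion between consecutive coefficients makes `x P` orthogonal to them too, and an
eigenvector of the resulting endomorphism `x Q ↦ x P` is killed by some `P - c • Q`.

For the family `P, Q, R`, the determinant `D(b)` of these coefficients for the pencil
`(R + b • Q) + a • P` is therefore never zero. But `D` is a polynomial whose reversal
`t ^ N * D(t⁻¹)`, `N = m(m+1)/2 > 0`, is the same determinant for the pencil
`(Q + t • R) + a • P`, nonzero at `t = 0`; so `D` is not constant and has a root.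
-/

noncomputable section

open Polynomial Matrix

namespace Matrix

variable {R S ι κ : Type*} [CommRing R] [CommRing S] {m : ℕ}

def cofactorVec (M : Matrix (Fin m) (Fin (m + 1)) R) (j : Fin (m + 1)) : R :=
  (-1) ^ (j : ℕ) * det (M.submatrix id j.succAbove)

theorem det_of_vecCons (w : Fin (m + 1) → R) (M : Matrix (Fin m) (Fin (m + 1)) R) :
    det (of (vecCons w (of.symm M))) = w ⬝ᵥ cofactorVec M := by
  rw [det_succ_row_zero, dotProduct]
  refine Finset.sum_congr rfl fun j _ => ?_
  simp only [cofactorVec, of_apply, cons_val_zero]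
  rw [mul_assoc, mul_left_comm]
  rfl

theorem mulVec_cofactorVec (M : Matrix (Fin m) (Fin (m + 1)) R) : M *ᵥ cofactorVec M = 0 := by
  funext r
  rw [Pi.zero_apply, mulVec, ← det_of_vecCons]
  exact det_zero_of_row_eq (Fin.succ_ne_zero r).symm (by ext; simp)

theorem cofactorVec_map (f : R →+* S) (M : Matrix (Fin m) (Fin (m + 1)) R) :
    cofactorVec (M.map f) = fun j => f (cofactorVec M j) := by
  funext j
  simp [cofactorVec, f.map_det, submatrix_map]

theorem cofactorVec_smul (s : R) (M : Matrix (Fin m) (Fin (m + 1)) R) :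
    cofactorVec (s • M) = s ^ m • cofactorVec M := by
  funext j
  simp only [cofactorVec, submatrix_smul, det_smul, Fintype.card_fin, Pi.smul_apply, smul_eq_mul]
  ring

theorem exists_vecMul_eq_of_dotProduct_cofactorVec_eq_zero {K : Type*} [Field K]
    {M : Matrix (Fin m) (Fin (m + 1)) K} (hM : Function.Injective (· ᵥ* M))
    {w : Fin (m + 1) → K} (hw : w ⬝ᵥ cofactorVec M = 0) : ∃ x, x ᵥ* M = w := by
  rw [← det_of_vecCons, ← exists_vecMul_eq_zero_iff] at hw
  obtain ⟨y, hy0, hy⟩ := hw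
  rw [vecMul_cons, Equiv.apply_symm_apply] at hy
  have hhead : vecHead y ≠ 0 := by
    intro h
    rw [h, zero_smul, zero_add] at hy
    have htail : vecTail y = 0 := hM (by simpa using hy)
    exact hy0 (by rw [← cons_head_tail y, h, htail]; simp)
  refine ⟨-(vecHead y)⁻¹ • vecTail y, ?_⟩
  rw [neg_smul, neg_vecMul, smul_vecMul, eq_neg_add_of_add_eq hy, add_zero, smul_neg,
    neg_neg, smul_smul, inv_mul_cancel₀ hhead, one_smul]

def pencil (P Q : Matrix ι κ R) : Matrix ι κ R[X] := P.map C + (X : R[X]) • Q.map C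

theorem pencil_map (f : R →+* S) (P Q : Matrix ι κ R) :
    (pencil P Q).map (mapRingHom f) = pencil (P.map f) (Q.map f) := by
  ext; simp [pencil]

theorem pencil_map_evalRingHom (a : R) (P Q : Matrix ι κ R) :
    (pencil P Q).map (evalRingHom a) = P + a • Q := by
  ext i j
  simp [pencil]
  ring

theorem pencil_smul_smul (s : R) (P Q : Matrix ι κ R) :
    pencil (s • P) (s • Q) = C s • pencil P Q := by
  ext i j : 1
  simp only [pencil, add_apply, map_apply, smul_apply, smul_eq_mul, C_mul]
  ring

theorem pencil_smul_right (s : R) (P Q : Matrix ι κ R) :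
    pencil P (s • Q) = (pencil P Q).map (compRingHom (C s * X)) := by
  ext i j : 1
  simp [pencil]
  ring

def pencilCoeff (P Q : Matrix (Fin m) (Fin (m + 1)) R) (k : ℕ) (j : Fin (m + 1)) : R :=
  (cofactorVec (pencil P Q) j).coeff k

def pencilCoeffMatrix (P Q : Matrix (Fin m) (Fin (m + 1)) R) :
    Matrix (Fin (m + 1)) (Fin (m + 1)) R :=
  of fun j k => pencilCoeff P Q k j

section

variable (P Q : Matrix (Fin m) (Fin (m + 1)) R)

theorem pencilCoeff_map (f : R →+* S) (k : ℕ) (j : Fin (m + 1)) :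
    pencilCoeff (P.map f) (Q.map f) k j = f (pencilCoeff P Q k j) := by
  rw [pencilCoeff, ← pencil_map, cofactorVec_map, coe_mapRingHom, coeff_map, pencilCoeff]

theorem pencilCoeff_smul_smul (s : R) (k : ℕ) :
    pencilCoeff (s • P) (s • Q) k = s ^ m • pencilCoeff P Q k := by
  funext j
  rw [Pi.smul_apply, smul_eq_mul, pencilCoeff, pencilCoeff, pencil_smul_smul, cofactorVec_smul,
    Pi.smul_apply, smul_eq_mul, ← C_pow, coeff_C_mul]

theorem pencilCoeff_smul_right (s : R) (k : ℕ) :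
    pencilCoeff P (s • Q) k = s ^ k • pencilCoeff P Q k := by
  funext j
  rw [Pi.smul_apply, smul_eq_mul, pencilCoeff, pencilCoeff, pencil_smul_right, cofactorVec_map]
  dsimp only
  rw [coe_compRingHom_apply, comp_C_mul_X_coeff, mul_comm]

theorem mulVec_pencilCoeff_zero : P *ᵥ pencilCoeff P Q 0 = 0 := by
  funext r
  have h := congrArg (coeff · 0) (congrFun (mulVec_cofactorVec (pencil P Q)) r)
  simpa [pencil, mulVec, dotProduct, pencilCoeff, finsetSum_coeff, add_mul] using h

theorem mulVec_pencilCoeff_succ (k : ℕ) :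
    P *ᵥ pencilCoeff P Q (k + 1) + Q *ᵥ pencilCoeff P Q k = 0 := by
  funext r
  have h := congrArg (coeff · (k + 1)) (congrFun (mulVec_cofactorVec (pencil P Q)) r)
  simpa [pencil, mulVec, dotProduct, pencilCoeff, finsetSum_coeff, add_mul,
    Finset.sum_add_distrib, mul_assoc] using h

theorem pencilCoeff_top : pencilCoeff P Q m = cofactorVec Q := by
  funext j
  have h : (pencil P Q).submatrix id j.succAbove =
      (X : R[X]) • (Q.submatrix id j.succAbove).map C + (P.submatrix id j.succAbove).map C := by
    ext; simp [pencil, add_comm]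
  have hsign : (-1 : R[X]) ^ (j : ℕ) = C ((-1) ^ (j : ℕ)) := by simp
  have htop := coeff_det_X_add_C_card (Q.submatrix id j.succAbove) (P.submatrix id j.succAbove)
  rw [Fintype.card_fin] at htop
  rw [pencilCoeff, cofactorVec, cofactorVec, h, hsign, coeff_C_mul, htop]

theorem vecMul_pencilCoeffMatrix_apply (w : Fin (m + 1) → R) (k : Fin (m + 1)) :
    (w ᵥ* pencilCoeffMatrix P Q) k = w ⬝ᵥ pencilCoeff P Q k :=
  rfl

theorem map_det_pencilCoeffMatrix (f : R →+* S) :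
    f (pencilCoeffMatrix P Q).det = (pencilCoeffMatrix (P.map f) (Q.map f)).det := by
  rw [f.map_det]
  congr 1
  ext j k
  simp [pencilCoeffMatrix, pencilCoeff_map]

theorem det_pencilCoeffMatrix_smul_smul (s : R) :
    (pencilCoeffMatrix (s • P) (s • Q)).det =
      s ^ (m * (m + 1)) * (pencilCoeffMatrix P Q).det := by
  have h : pencilCoeffMatrix (s • P) (s • Q) = s ^ m • pencilCoeffMatrix P Q := by
    ext j k
    simp [pencilCoeffMatrix, pencilCoeff_smul_smul]
  rw [h, det_smul, Fintype.card_fin, pow_mul]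

theorem det_pencilCoeffMatrix_smul_right (s : R) :
    (pencilCoeffMatrix P (s • Q)).det =
      s ^ (∑ k : Fin (m + 1), (k : ℕ)) * (pencilCoeffMatrix P Q).det := by
  have h : pencilCoeffMatrix P (s • Q) =
      of fun j (k : Fin (m + 1)) => s ^ (k : ℕ) * pencilCoeffMatrix P Q j k := by
    ext j k
    simp [pencilCoeffMatrix, pencilCoeff_smul_right]
  rw [h, det_mul_row, Finset.prod_pow_eq_pow_sum]

theorem vecMul_vecMul_pencilCoeffMatrix_eq_zero {x : Fin m → R}
    (hx : x ᵥ* Q ᵥ* pencilCoeffMatrix P Q = 0) : x ᵥ* P ᵥ* pencilCoeffMatrix P Q = 0 := by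
  funext k
  rw [vecMul_pencilCoeffMatrix_apply, ← dotProduct_mulVec, Pi.zero_apply]
  induction k using Fin.cases with
  | zero => rw [Fin.val_zero, mulVec_pencilCoeff_zero, dotProduct_zero]
  | succ i =>
    have hi := congrFun hx i.castSucc
    rw [vecMul_pencilCoeffMatrix_apply, ← dotProduct_mulVec, Pi.zero_apply] at hi
    rw [Fin.val_succ, ← Fin.val_castSucc,
      eq_neg_of_add_eq_zero_left (mulVec_pencilCoeff_succ P Q _), dotProduct_neg, hi, neg_zero]

end

theorem eval_det_pencilCoeffMatrix_pencil (P Q N : Matrix (Fin m) (Fin (m + 1)) R) (b : R) :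
    (pencilCoeffMatrix (pencil P Q) (N.map C)).det.eval b =
      (pencilCoeffMatrix (P + b • Q) N).det := by
  rw [← coe_evalRingHom, map_det_pencilCoeffMatrix, pencil_map_evalRingHom, map_map]
  congr
  ext; simp

theorem det_pencilCoeffMatrix_add_smul {K : Type*} [Field K]
    (P Q N : Matrix (Fin m) (Fin (m + 1)) K) {t : K} (ht : t ≠ 0) :
    (pencilCoeffMatrix (Q + t • N) P).det =
      t ^ (∑ k : Fin (m + 1), (k : ℕ)) * (pencilCoeffMatrix (N + t⁻¹ • Q) P).det := by
  have hQN : Q + t • N = t • (N + t⁻¹ • Q) := by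
    rw [smul_add, smul_smul, mul_inv_cancel₀ ht, one_smul]
    exact add_comm _ _
  have hP : P = t • (t⁻¹ • P) := by rw [smul_smul, mul_inv_cancel₀ ht, one_smul]
  have hgauss : m * (m + 1) = 2 * ∑ k : Fin (m + 1), (k : ℕ) := by
    have := Finset.sum_range_id_mul_two (m + 1)
    rw [Nat.add_sub_cancel] at this
    rw [Fin.sum_univ_eq_sum_range (fun k => k)]
    linarith
  conv_lhs => rw [hQN, hP]
  rw [det_pencilCoeffMatrix_smul_smul, det_pencilCoeffMatrix_smul_right, hgauss, two_mul, pow_add,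
    inv_pow, mul_assoc, mul_inv_cancel_left₀ (pow_ne_zero _ ht)]

end Matrix

theorem LinearMap.exists_ne_zero_apply_eq_smul_apply {K V W : Type*} [Field K] [IsAlgClosed K]
    [AddCommGroup V] [Module K V] [FiniteDimensional K V] [Nontrivial V]
    [AddCommGroup W] [Module K W] (p : V →ₗ[K] W) (q : V ≃ₗ[K] W) :
    ∃ (c : K) (v : V), v ≠ 0 ∧ p v = c • q v := by
  obtain ⟨c, hc⟩ := Module.End.exists_eigenvalue (q.symm.toLinearMap ∘ₗ p)
  obtain ⟨v, hv⟩ := hc.exists_hasEigenvector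
  refine ⟨c, v, hv.2, ?_⟩
  rw [← q.apply_symm_apply (p v), ← map_smul]
  exact congrArg q hv.apply_eq_smul

theorem Polynomial.exists_isRoot_of_eval_eq_pow_mul_eval_inv {K : Type*} [Field K]
    [IsAlgClosed K] {p q : K[X]} {D : ℕ} (hD : D ≠ 0) (hq : q.eval 0 ≠ 0)
    (h : ∀ t ≠ 0, q.eval t = t ^ D * p.eval t⁻¹) : ∃ b, p.IsRoot b := by
  by_cases hp : p.degree = 0
  · rw [eq_C_of_degree_eq_zero hp] at h
    have hq' : q = C (p.coeff 0) * X ^ D := by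
      refine eq_of_infinite_eval_eq _ _ ((Set.finite_singleton 0).infinite_compl.mono ?_)
      intro t ht
      rw [Set.mem_ofPred_eq, h t ht, eval_mul, eval_C, eval_pow, eval_X, eval_C, mul_comm]
    simp [hq', hD] at hq
  · exact IsAlgClosed.exists_root p hp

namespace Matrix

variable {K : Type*} [Field K] [IsAlgClosed K] {m : ℕ}

theorem det_pencilCoeffMatrix_ne_zero {P Q : Matrix (Fin m) (Fin (m + 1)) K}
    (hQ : Function.Injective (· ᵥ* Q))
    (hPQ : ∀ a : K, Function.Injective (· ᵥ* (P + a • Q))) :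
    (pencilCoeffMatrix P Q).det ≠ 0 := by
  intro hdet
  set W := LinearMap.ker (pencilCoeffMatrix P Q).vecMulLinear
  set V := W.comap Q.vecMulLinear
  have hQsurj : ∀ w : W, ∃ x : V, Q.vecMulLinear.restrict (fun _ hx => hx) x = w := by
    rintro ⟨w, hw⟩
    have hw' : w ⬝ᵥ cofactorVec Q = 0 := by
      rw [← pencilCoeff_top P Q]
      exact congrFun hw (Fin.last m)
    obtain ⟨x, rfl⟩ := exists_vecMul_eq_of_dotProduct_cofactorVec_eq_zero hQ hw'
    exact ⟨⟨x, hw⟩, rfl⟩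
  let q : V ≃ₗ[K] W := LinearEquiv.ofBijective (Q.vecMulLinear.restrict fun _ hx => hx)
    ⟨fun x y h => Subtype.ext (hQ (congrArg Subtype.val h)), fun w => hQsurj w⟩
  let p : V →ₗ[K] W :=
    P.vecMulLinear.restrict fun _ hx => vecMul_vecMul_pencilCoeffMatrix_eq_zero P Q hx
  have : Nontrivial W := by
    obtain ⟨w, hw0, hw⟩ := exists_vecMul_eq_zero_iff.mpr hdet
    exact ⟨⟨⟨w, hw⟩, 0, fun h => hw0 (congrArg Subtype.val h)⟩⟩
  have : Nontrivial V := q.toEquiv.nontrivial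
  obtain ⟨c, ⟨x, hxV⟩, hx0, hx⟩ := p.exists_ne_zero_apply_eq_smul_apply q
  refine hx0 (Subtype.ext (hPQ (-c) ?_))
  have hx' : x ᵥ* P = c • x ᵥ* Q := congrArg Subtype.val hx
  change x ᵥ* (P + (-c) • Q) = 0 ᵥ* (P + (-c) • Q)
  rw [zero_vecMul, vecMul_add, vecMul_smul, hx', neg_smul, add_neg_cancel]

theorem exists_not_injective_vecMul_smul_add_smul_add_smul (hm : m ≠ 0)
    (P Q R : Matrix (Fin m) (Fin (m + 1)) K) :
    ∃ a b c : K, (a, b, c) ≠ 0 ∧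
      ¬Function.Injective (· ᵥ* (a • P + b • Q + c • R)) := by
  by_contra! h
  have hP : Function.Injective (· ᵥ* P) := by simpa using h 1 0 0 (by simp)
  have hD : ∑ k : Fin (m + 1), (k : ℕ) ≠ 0 := fun h0 =>
    hm (Finset.sum_eq_zero_iff.mp h0 (Fin.last m) (Finset.mem_univ _))
  have hpencil : ∀ b a : K, Function.Injective (· ᵥ* (R + b • Q + a • P)) := fun b a => by
    have e : R + b • Q + a • P = a • P + b • Q + (1 : K) • R := by rw [one_smul]; abel
    simpa only [e] using h a b 1 (by simp)
  have hpencil₀ : ∀ a : K, Function.Injective (· ᵥ* (Q + a • P)) := fun a => by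
    have e : Q + a • P = a • P + (1 : K) • Q + (0 : K) • R := by
      rw [one_smul, zero_smul]; abel
    simpa only [e] using h a 1 0 (by simp)
  obtain ⟨b, hb⟩ := Polynomial.exists_isRoot_of_eval_eq_pow_mul_eval_inv
    (p := (pencilCoeffMatrix (pencil R Q) (P.map C)).det)
    (q := (pencilCoeffMatrix (pencil Q R) (P.map C)).det) hD
    (by simpa [eval_det_pencilCoeffMatrix_pencil] using
      det_pencilCoeffMatrix_ne_zero hP hpencil₀)
    (fun t ht => by simpa only [eval_det_pencilCoeffMatrix_pencil] using
      det_pencilCoeffMatrix_add_smul P Q R ht)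
  rw [IsRoot, eval_det_pencilCoeffMatrix_pencil] at hb
  exact det_pencilCoeffMatrix_ne_zero hP (hpencil b) hb

end Matrix

theorem LinearMap.exists_ne_zero_ne_zero_apply_eq_zero {K V W U : Type*} [Field K]
    [IsAlgClosed K] [AddCommGroup V] [Module K V] [FiniteDimensional K V]
    [AddCommGroup W] [Module K W] [FiniteDimensional K W]
    [AddCommGroup U] [Module K U] [FiniteDimensional K U]
    (β : V →ₗ[K] W →ₗ[K] U) (hV : Module.finrank K V ≠ 0) (hW : Module.finrank K W = 3)
    (hU : Module.finrank K U = Module.finrank K V + 1) :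
    ∃ v ≠ 0, ∃ w ≠ 0, β v w = 0 := by
  set m := Module.finrank K V
  let bV := Module.finBasis K V
  let bW := (Module.finBasis K W).reindex (finCongr hW)
  let bU := (Module.finBasis K U).reindex (finCongr hU)
  let M : W →ₗ[K] Matrix (Fin m) (Fin (m + 1)) K :=
    (transposeLinearEquiv _ _ K K).toLinearMap ∘ₗ (LinearMap.toMatrix bV bU).toLinearMap ∘ₗ
      β.flip
  obtain ⟨a, b, c, habc, hM⟩ :=
    exists_not_injective_vecMul_smul_add_smul_add_smul hV (M (bW 0)) (M (bW 1)) (M (bW 2))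
  set w := a • bW 0 + b • bW 1 + c • bW 2
  have hMw : a • M (bW 0) + b • M (bW 1) + c • M (bW 2) = M w := by
    simp only [w, map_add, map_smul]
  rw [hMw] at hM
  change ¬Function.Injective (M w).vecMulLinear at hM
  rw [injective_iff_map_eq_zero] at hM
  push Not at hM
  obtain ⟨x, hx, hx0⟩ := hM
  refine ⟨bV.equivFun.symm x, (LinearEquiv.map_ne_zero_iff _).mpr hx0, w,
    fun hw0 => habc ?_, ?_⟩
  · have := Fintype.linearIndependent_iff.mp bW.linearIndependent ![a, b, c]
      (by simpa [Fin.sum_univ_three] using hw0)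
    exact Prod.ext (this 0) (Prod.ext (this 1) (this 2))
  · have hrepr : ⇑(bV.repr (bV.equivFun.symm x)) = x := bV.equivFun.apply_symm_apply x
    have hx' : LinearMap.toMatrix bV bU (β.flip w) *ᵥ bV.repr (bV.equivFun.symm x) = 0 := by
      rw [hrepr, ← vecMul_transpose]
      exact hx
    rwa [LinearMap.toMatrix_mulVec_repr, Finsupp.coe_eq_zero,
      LinearEquiv.map_eq_zero_iff] at hx'

end

/-- Let `X` be a surface with `χ(O_X) = 1` and `q(X) = h¹(O_X) = 3` and let
`P ∈ Pic⁰(X)` with `h⁰(−P) = 0` and `h¹(−P) > 0`.  We model the cohomology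
groups `H¹(−P)`, `H¹(O_X)`, `H²(−P)` as finite-dimensional complex vector
spaces; `χ(−P) = χ(O_X)` gives `h⁰(−P) − h¹(−P) + h²(−P) = 1`.  If the cup
product `H¹(−P) ⊗ H¹(O_X) → H²(−P)` is nonzero on all nonzero simple tensors,
we get a contradiction. -/
theorem no_isolated_nontrivial_point
    (H1P H1O H2P : Type*)
    [AddCommGroup H1P] [Module ℂ H1P] [FiniteDimensional ℂ H1P]
    [AddCommGroup H1O] [Module ℂ H1O] [FiniteDimensional ℂ H1O]
    [AddCommGroup H2P] [Module ℂ H2P] [FiniteDimensional ℂ H2P]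
    (h0P : ℕ) (hh0 : h0P = 0)
    (hq : Module.finrank ℂ H1O = 3)
    (hh1pos : 0 < Module.finrank ℂ H1P)
    (hchi : (h0P : ℤ) - Module.finrank ℂ H1P + Module.finrank ℂ H2P = 1)
    (cup : H1P →ₗ[ℂ] H1O →ₗ[ℂ] H2P)
    (hcup : ∀ v : H1P, ∀ w : H1O, v ≠ 0 → w ≠ 0 → cup v w ≠ 0) :
    False := by
  subst hh0
  have hh2 : Module.finrank ℂ H2P = Module.finrank ℂ H1P + 1 := by push_cast at hchi; omega
  obtain ⟨v, hv, w, hw, hvw⟩ := cup.exists_ne_zero_ne_zero_apply_eq_zero hh1pos.ne' hq hh2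
  exact hcup v w hv hw hvw
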